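/- arXiv:2309.03112 — 2 statements merged into one kernel-verified Lean document; each statement's English description precedes it below -/
import Mathlib

section
/- Let I be an invertible 3×3 real matrix (inertia tensor), C a 3×3 real matrix (viscous coefficient), and N* : ℝ → ℝ³ a continuous function (deterministic torque). Let R : ℝ → M₃(ℝ) and ℓ : ℝ → ℝ³ be differentiable with R(t) ∈ SO(3) for all t, and set h(t) = h(R(t), ℓ(t)). Then the pair of equations (R(t)ᵀṘ(t))^∨ = I⁻¹ℓ(t) and ℓ̇(t) + (I⁻¹ℓ(t)) × ℓ(t) = −C I⁻¹ℓ(t) + N*(t) holds for all t if and only if ḣ(t)h(t)⁻¹ = [[−(I⁻¹ℓ(t))^∧, −C I⁻¹ℓ(t) + N*(t)],[0ᵀ, 0]] for all t. -/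
/-!
Differentiating `RᵀR = 1` shows that `Ω = RᵀṘ` is skew-symmetric, with `ṘᵀR = -Ω`. Since
`h⁻¹ = [[R, -Rℓ],[0ᵀ, 1]]`, this gives `ḣh⁻¹ = [[-Ω, ℓ̇ + Ωℓ],[0ᵀ, 0]]`. On skew-symmetric
matrices `vee` inverts `hat`, so the upper-left blocks agree iff `Ω^∨ = I⁻¹ℓ`, and then
`Ωℓ = (I⁻¹ℓ)^∧ ℓ = (I⁻¹ℓ) × ℓ` turns the equality of the right columns into the second
Euler equation.
-/

open Matrix MeasureTheory
noncomputable section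

/-- The hat map sending `ω ∈ ℝ³` to the skew-symmetric matrix `ω^∧`. -/
def hat (ω : Fin 3 → ℝ) : Matrix (Fin 3) (Fin 3) ℝ :=
  !![0, -ω 2, ω 1; ω 2, 0, -ω 0; -ω 1, ω 0, 0]

/-- The vee map, inverse of `hat` on skew-symmetric matrices. -/
def vee (A : Matrix (Fin 3) (Fin 3) ℝ) : Fin 3 → ℝ := ![A 2 1, A 0 2, A 1 0]

/-- Membership in SO(3): `RᵀR = 1` and `det R = 1`. -/
def SO3 (R : Matrix (Fin 3) (Fin 3) ℝ) : Prop := Rᵀ * R = 1 ∧ R.det = 1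

/-- The group element `h(R, ℓ) = [[Rᵀ, ℓ],[0ᵀ, 1]]` of `SO(3)^T ⋉ ℝ³`,
as a 4×4 matrix indexed by `Fin 3 ⊕ Fin 1`. -/
def hmat (R : Matrix (Fin 3) (Fin 3) ℝ) (l : Fin 3 → ℝ) :
    Matrix (Fin 3 ⊕ Fin 1) (Fin 3 ⊕ Fin 1) ℝ :=
  fromBlocks Rᵀ (replicateCol (Fin 1) l) 0 1

attribute [local instance] Matrix.normedAddCommGroup Matrix.normedSpace

section MatrixCalculus

variable {m n : Type*}

theorem hasDerivAt_matrix_iff [Fintype n] {f : ℝ → Matrix m n ℝ} {f' : Matrix m n ℝ} {t : ℝ} :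
    HasDerivAt f f' t ↔ ∀ i j, HasDerivAt (fun s => f s i j) (f' i j) t := by
  refine ⟨fun h i j => hasDerivAt_pi.1 (hasDerivAt_pi.1 h i) j, fun h => ?_⟩
  exact hasDerivAt_pi.2 fun i => hasDerivAt_pi.2 fun j => h i j

theorem HasDerivAt.matrix_mul [Fintype n] {f g : ℝ → Matrix n n ℝ} {f' g' : Matrix n n ℝ} {t : ℝ}
    (hf : HasDerivAt f f' t) (hg : HasDerivAt g g' t) :
    HasDerivAt (fun s => f s * g s) (f' * g t + f t * g') t := by
  rw [hasDerivAt_matrix_iff] at hf hg ⊢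
  intro i j
  simp only [mul_apply, Matrix.add_apply, ← Finset.sum_add_distrib]
  exact HasDerivAt.fun_sum fun k _ => (hf i k).mul (hg k j)

theorem HasDerivAt.matrix_transpose [Fintype m] [Fintype n] {f : ℝ → Matrix m n ℝ}
    {f' : Matrix m n ℝ} {t : ℝ} (hf : HasDerivAt f f' t) : HasDerivAt (fun s => (f s)ᵀ) f'ᵀ t :=
  hasDerivAt_matrix_iff.2 fun i j => hasDerivAt_matrix_iff.1 hf j i

theorem transpose_deriv_mul_eq_neg_of_orthogonal [Fintype n] [DecidableEq n]
    {R : ℝ → Matrix n n ℝ} {t : ℝ} (hR : DifferentiableAt ℝ R t) (hO : ∀ s, (R s)ᵀ * R s = 1) :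
    (deriv R t)ᵀ * R t = -((R t)ᵀ * deriv R t) := by
  have hconst : HasDerivAt (fun s => (R s)ᵀ * R s)
      ((deriv R t)ᵀ * R t + (R t)ᵀ * deriv R t) t :=
    hR.hasDerivAt.matrix_transpose.matrix_mul hR.hasDerivAt
  simp only [hO] at hconst
  exact eq_neg_of_add_eq_zero_left (hconst.unique (hasDerivAt_const t 1))

end MatrixCalculus

theorem hat_mulVec (ω v : Fin 3 → ℝ) : hat ω *ᵥ v = ω ⨯₃ v := by
  funext i
  fin_cases i <;> simp [hat, cross_apply, mulVec, dotProduct, Fin.sum_univ_three] <;> ring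

theorem vee_hat (ω : Fin 3 → ℝ) : vee (hat ω) = ω := by
  funext i
  fin_cases i <;> simp [vee, hat]

theorem hat_vee_of_transpose_eq_neg {A : Matrix (Fin 3) (Fin 3) ℝ} (hA : Aᵀ = -A) :
    hat (vee A) = A := by
  have hA' : ∀ i j, A j i = -A i j := fun i j => congrFun (congrFun hA i) j
  ext i j
  fin_cases i <;> fin_cases j <;> simp [hat, vee] <;>
    linarith [hA' 0 0, hA' 1 1, hA' 2 2, hA' 0 1, hA' 0 2, hA' 1 2]

theorem vee_eq_iff_eq_hat {A : Matrix (Fin 3) (Fin 3) ℝ} (hA : Aᵀ = -A) (ω : Fin 3 → ℝ) :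
    vee A = ω ↔ A = hat ω :=
  ⟨fun h => h ▸ (hat_vee_of_transpose_eq_neg hA).symm, fun h => h ▸ vee_hat ω⟩

theorem inv_hmat {R : Matrix (Fin 3) (Fin 3) ℝ} (l : Fin 3 → ℝ) (hR : Rᵀ * R = 1) :
    (hmat R l)⁻¹ = fromBlocks R (replicateCol (Fin 1) (-(R *ᵥ l))) 0 1 := by
  apply inv_eq_right_inv
  rw [hmat, fromBlocks_multiply, hR, ← replicateCol_mulVec, mulVec_neg, mulVec_mulVec, hR,
    one_mulVec]
  simp [← replicateCol_add, ← fromBlocks_one]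

theorem hasDerivAt_hmat {R : ℝ → Matrix (Fin 3) (Fin 3) ℝ} {l : ℝ → Fin 3 → ℝ}
    {R' : Matrix (Fin 3) (Fin 3) ℝ} {l' : Fin 3 → ℝ} {t : ℝ}
    (hR : HasDerivAt R R' t) (hl : HasDerivAt l l' t) :
    HasDerivAt (fun s => hmat (R s) (l s)) (fromBlocks R'ᵀ (replicateCol (Fin 1) l') 0 0) t := by
  rw [hasDerivAt_matrix_iff] at hR ⊢
  rintro (i | i) (j | j) <;>
    simp only [hmat, fromBlocks_apply₁₁, fromBlocks_apply₁₂, fromBlocks_apply₂₁,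
      fromBlocks_apply₂₂, transpose_apply, replicateCol_apply, Matrix.zero_apply]
  · exact hR j i
  · exact hasDerivAt_pi.1 hl i
  · exact hasDerivAt_const _ _
  · exact hasDerivAt_const _ _

theorem deriv_hmat {R : ℝ → Matrix (Fin 3) (Fin 3) ℝ} {l : ℝ → Fin 3 → ℝ} {t : ℝ}
    (hR : DifferentiableAt ℝ R t) (hl : DifferentiableAt ℝ l t) :
    deriv (fun s => hmat (R s) (l s)) t =
      fromBlocks (deriv R t)ᵀ (replicateCol (Fin 1) (deriv l t)) 0 0 :=
  (hasDerivAt_hmat hR.hasDerivAt hl.hasDerivAt).deriv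

theorem fromBlocks_mul_inv_hmat {R R' : Matrix (Fin 3) (Fin 3) ℝ} {l l' : Fin 3 → ℝ}
    (hR : Rᵀ * R = 1) (hskew : R'ᵀ * R = -(Rᵀ * R')) :
    fromBlocks R'ᵀ (replicateCol (Fin 1) l') (0 : Matrix (Fin 1) (Fin 3) ℝ) 0 * (hmat R l)⁻¹ =
      fromBlocks (-(Rᵀ * R')) (replicateCol (Fin 1) (l' + (Rᵀ * R') *ᵥ l)) 0 0 := by
  rw [inv_hmat l hR, fromBlocks_multiply, ← replicateCol_mulVec, mulVec_neg, mulVec_mulVec,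
    hskew, neg_mulVec, neg_neg]
  simp [← replicateCol_add, add_comm]

theorem euler_iff_group_sde_general (Imat C : Matrix (Fin 3) (Fin 3) ℝ)
    (Nstar : ℝ → Fin 3 → ℝ)
    (R : ℝ → Matrix (Fin 3) (Fin 3) ℝ) (l : ℝ → Fin 3 → ℝ)
    (hR : Differentiable ℝ R) (hl : Differentiable ℝ l)
    (hSO : ∀ t, SO3 (R t)) :
    (∀ t, vee ((R t)ᵀ * deriv R t) = Imat⁻¹ *ᵥ l t ∧
        deriv l t + (Imat⁻¹ *ᵥ l t) ⨯₃ l t = -(C *ᵥ (Imat⁻¹ *ᵥ l t)) + Nstar t)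
    ↔
    (∀ t, deriv (fun s => hmat (R s) (l s)) t * (hmat (R t) (l t))⁻¹ =
        fromBlocks (-hat (Imat⁻¹ *ᵥ l t))
          (replicateCol (Fin 1) (-(C *ᵥ (Imat⁻¹ *ᵥ l t)) + Nstar t)) 0 0) := by
  refine forall_congr' fun t => ?_
  have hskew := transpose_deriv_mul_eq_neg_of_orthogonal (hR t) fun s => (hSO s).1
  have hΩ : ((R t)ᵀ * deriv R t)ᵀ = -((R t)ᵀ * deriv R t) := by
    rw [transpose_mul, transpose_transpose, hskew]
  rw [deriv_hmat (hR t) (hl t), fromBlocks_mul_inv_hmat (hSO t).1 hskew,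
    fromBlocks_inj, replicateCol_inj, neg_inj, vee_eq_iff_eq_hat hΩ]
  simp only [and_true]
  exact and_congr_right fun h => by rw [h, hat_mulVec]

/-- For an invertible inertia tensor `I`, a viscous coefficient `C` and a
continuous torque `N*`, the Euler equations `(RᵀṘ)^∨ = I⁻¹ℓ` and
`ℓ̇ + (I⁻¹ℓ) × ℓ = −CI⁻¹ℓ + N*` hold for all `t` iff
`ḣh⁻¹ = [[−(I⁻¹ℓ)^∧, −CI⁻¹ℓ + N*],[0ᵀ, 0]]` for all `t`. -/
theorem euler_iff_group_sde (Imat C : Matrix (Fin 3) (Fin 3) ℝ) (hI : IsUnit Imat)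
    (Nstar : ℝ → Fin 3 → ℝ) (hN : Continuous Nstar)
    (R : ℝ → Matrix (Fin 3) (Fin 3) ℝ) (l : ℝ → Fin 3 → ℝ)
    (hR : Differentiable ℝ R) (hl : Differentiable ℝ l)
    (hSO : ∀ t, SO3 (R t)) :
    (∀ t, vee ((R t)ᵀ * deriv R t) = Imat⁻¹ *ᵥ l t ∧
        deriv l t + (Imat⁻¹ *ᵥ l t) ⨯₃ l t = -(C *ᵥ (Imat⁻¹ *ᵥ l t)) + Nstar t)
    ↔
    (∀ t, deriv (fun s => hmat (R s) (l s)) t * (hmat (R t) (l t))⁻¹ =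
        fromBlocks (-hat (Imat⁻¹ *ᵥ l t))
          (replicateCol (Fin 1) (-(C *ᵥ (Imat⁻¹ *ᵥ l t)) + Nstar t)) 0 0) :=
  euler_iff_group_sde_general Imat C Nstar R l hR hl hSO
end
end

section
/- For every x = (ω, v) ∈ ℝ⁶, letting Σ = x xᵀ (a symmetric 6×6 matrix), the square of the adjoint matrix satisfies [ad(x)]² = ([[ω^∧, 0₃],[v^∧, ω^∧]])² = [[Σ', 0₃],[Σ'', Σ']], where Σ' and Σ'' are the 3×3 matrices built from the entries of Σ as specified in the context. Consequently, for any measure on ℝ⁶ with second-moment matrix Σ, the expectation of [ad(x)]² equals [[Σ', 0₃],[Σ'', Σ']]. -/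
open Matrix MeasureTheory
noncomputable section

/-- The 6×6 adjoint matrix `[ad(x)] = [[ω^∧, 0],[v^∧, ω^∧]]` for `x = (ω, v) ∈ ℝ⁶`,
with `ℝ⁶` realized as `(Fin 3 ⊕ Fin 3) → ℝ`. -/
def adMat (ω v : Fin 3 → ℝ) : Matrix (Fin 3 ⊕ Fin 3) (Fin 3 ⊕ Fin 3) ℝ :=
  fromBlocks (hat ω) 0 (hat v) (hat ω)

/-- The matrix `Σ'` built from a 6×6 matrix `Σ`.
Indices 1,…,6 of `ℝ⁶` correspond to `inl 0, inl 1, inl 2, inr 0, inr 1, inr 2`. -/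
def Sig' (S : Matrix (Fin 3 ⊕ Fin 3) (Fin 3 ⊕ Fin 3) ℝ) : Matrix (Fin 3) (Fin 3) ℝ :=
  !![-S (Sum.inl 1) (Sum.inl 1) - S (Sum.inl 2) (Sum.inl 2), S (Sum.inl 0) (Sum.inl 1), S (Sum.inl 0) (Sum.inl 2);
     S (Sum.inl 0) (Sum.inl 1), -S (Sum.inl 0) (Sum.inl 0) - S (Sum.inl 2) (Sum.inl 2), S (Sum.inl 1) (Sum.inl 2);
     S (Sum.inl 0) (Sum.inl 2), S (Sum.inl 1) (Sum.inl 2), -S (Sum.inl 0) (Sum.inl 0) - S (Sum.inl 1) (Sum.inl 1)]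

/-- The matrix `Σ''` built from a 6×6 matrix `Σ`. -/
def Sig'' (S : Matrix (Fin 3 ⊕ Fin 3) (Fin 3 ⊕ Fin 3) ℝ) : Matrix (Fin 3) (Fin 3) ℝ :=
  !![-2 * (S (Sum.inr 1) (Sum.inl 1) + S (Sum.inr 2) (Sum.inl 2)),
       S (Sum.inr 0) (Sum.inl 1) + S (Sum.inr 1) (Sum.inl 0),
       S (Sum.inr 0) (Sum.inl 2) + S (Sum.inr 2) (Sum.inl 0);
     S (Sum.inr 0) (Sum.inl 1) + S (Sum.inr 1) (Sum.inl 0),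
       -2 * (S (Sum.inr 0) (Sum.inl 0) + S (Sum.inr 2) (Sum.inl 2)),
       S (Sum.inr 1) (Sum.inl 2) + S (Sum.inr 2) (Sum.inl 1);
     S (Sum.inr 0) (Sum.inl 2) + S (Sum.inr 2) (Sum.inl 0),
       S (Sum.inr 1) (Sum.inl 2) + S (Sum.inr 2) (Sum.inl 1),
       -2 * (S (Sum.inr 0) (Sum.inl 0) + S (Sum.inr 1) (Sum.inl 1))]

/-!
Everything follows from `a^∧ b^∧ = b aᵀ - (a ⬝ b) I`, the matrix form of
`a × (b × u) = b (a ⬝ u) - u (a ⬝ b)`. Squaring the block matrix puts `(ω^∧)²` on the diagonal and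
`v^∧ ω^∧ + ω^∧ v^∧` below it, and `Σ'`, `Σ''` are exactly these expressions written through the
blocks `ω ωᵀ` and `v ωᵀ` of `Σ = x xᵀ`. Since `Σ'` and `Σ''` are linear in `Σ`, the expectation
passes inside, turning `x xᵀ` into the second-moment matrix.
-/

theorem hat_mul_hat (a b : Fin 3 → ℝ) :
    hat a * hat b = vecMulVec b a - (a ⬝ᵥ b) • (1 : Matrix (Fin 3) (Fin 3) ℝ) := by
  ext i j
  fin_cases i <;> fin_cases j <;>
    simp [hat, vecMulVec_apply, mul_apply, dotProduct, Fin.sum_univ_succ] <;> ring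

theorem adMat_sq (ω v : Fin 3 → ℝ) :
    adMat ω v ^ 2 = fromBlocks (hat ω * hat ω) 0 (hat v * hat ω + hat ω * hat v) (hat ω * hat ω) := by
  simp [adMat, sq, fromBlocks_multiply]

theorem Sig'_eq_of_isSymm {S : Matrix (Fin 3 ⊕ Fin 3) (Fin 3 ⊕ Fin 3) ℝ} (hS : S.IsSymm) :
    Sig' S = S.toBlocks₁₁ - S.toBlocks₁₁.trace • (1 : Matrix (Fin 3) (Fin 3) ℝ) := by
  ext i j
  fin_cases i <;> fin_cases j <;>
    simp [Sig', trace, toBlocks₁₁, Fin.sum_univ_succ] <;> first | ring | exact hS.apply _ _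

theorem Sig''_eq (S : Matrix (Fin 3 ⊕ Fin 3) (Fin 3 ⊕ Fin 3) ℝ) :
    Sig'' S =
      S.toBlocks₂₁ + S.toBlocks₂₁ᵀ - (2 * S.toBlocks₂₁.trace) • (1 : Matrix (Fin 3) (Fin 3) ℝ) := by
  ext i j
  fin_cases i <;> fin_cases j <;>
    simp [Sig'', trace, toBlocks₂₁, Fin.sum_univ_succ] <;> ring

section
variable {R l m n o : Type*} [Mul R] (a : l → R) (b : m → R) (c : n → R) (d : o → R)

theorem toBlocks₁₁_vecMulVec_sumElim :
    (vecMulVec (Sum.elim a b) (Sum.elim c d)).toBlocks₁₁ = vecMulVec a c :=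
  rfl

theorem toBlocks₂₁_vecMulVec_sumElim :
    (vecMulVec (Sum.elim a b) (Sum.elim c d)).toBlocks₂₁ = vecMulVec b c :=
  rfl

end

theorem adMat_sq_eq_fromBlocks_Sig (ω v : Fin 3 → ℝ) :
    adMat ω v ^ 2 =
      fromBlocks (Sig' (vecMulVec (Sum.elim ω v) (Sum.elim ω v))) 0
        (Sig'' (vecMulVec (Sum.elim ω v) (Sum.elim ω v)))
        (Sig' (vecMulVec (Sum.elim ω v) (Sum.elim ω v))) := by
  have hsymm : (vecMulVec (Sum.elim ω v) (Sum.elim ω v)).IsSymm := transpose_vecMulVec _ _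
  rw [adMat_sq, Sig'_eq_of_isSymm hsymm, Sig''_eq]
  simp only [hat_mul_hat, toBlocks₁₁_vecMulVec_sumElim, toBlocks₂₁_vecMulVec_sumElim,
    transpose_vecMulVec, trace_vecMulVec, dotProduct_comm v ω, two_mul, add_smul]
  congr 1
  abel

theorem LinearMap.integral_comp_comm_matrix {α ι : Type*} [MeasurableSpace α] [Fintype ι]
    {μ : Measure α} (f : Matrix ι ι ℝ →ₗ[ℝ] ℝ) {M : α → Matrix ι ι ℝ}
    (hM : ∀ i j, Integrable (fun x => M x i j) μ) :
    ∫ x, f (M x) ∂μ = f (of fun i j => ∫ x, M x i j ∂μ) := by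
  classical
  have hf : ∀ A : Matrix ι ι ℝ, f A = ∑ i, ∑ j, A i j * f (Matrix.single i j 1) := by
    have hsingle : ∀ i j (a : ℝ), f (Matrix.single i j a) = a * f (Matrix.single i j 1) := by
      intro i j a
      rw [← smul_eq_mul, ← map_smul, smul_single, smul_eq_mul, mul_one]
    intro A
    conv_lhs => rw [matrix_eq_sum_single A]
    rw [map_sum]
    refine Finset.sum_congr rfl fun i _ => ?_
    rw [map_sum]
    exact Finset.sum_congr rfl fun j _ => hsingle i j _
  simp only [hf (M _), hf (of _), of_apply]
  rw [integral_finsetSum _ fun i _ => integrable_finsetSum _ fun j _ => (hM i j).mul_const _]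
  refine Finset.sum_congr rfl fun i _ => ?_
  rw [integral_finsetSum _ fun j _ => (hM i j).mul_const _]
  exact Finset.sum_congr rfl fun j _ => integral_mul_const _ _

def sigBlocks :
    Matrix (Fin 3 ⊕ Fin 3) (Fin 3 ⊕ Fin 3) ℝ →ₗ[ℝ] Matrix (Fin 3 ⊕ Fin 3) (Fin 3 ⊕ Fin 3) ℝ where
  toFun S := fromBlocks (Sig' S) 0 (Sig'' S) (Sig' S)
  map_add' S T := by
    ext (i | i) (j | j) <;> fin_cases i <;> fin_cases j <;> simp [Sig', Sig''] <;> ring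
  map_smul' c S := by
    ext (i | i) (j | j) <;> fin_cases i <;> fin_cases j <;> simp [Sig', Sig''] <;> ring

/-- For `x = (ω,v) ∈ ℝ⁶` with `Σ = x xᵀ`, one has
`[ad(x)]² = [[Σ', 0],[Σ'', Σ']]`; consequently, for any probability measure on `ℝ⁶`
(with square-integrable coordinates) with second-moment matrix `Σ`, the expectation of
`[ad(x)]²` equals `[[Σ', 0],[Σ'', Σ']]`. -/
theorem adSq_eq_Sig_blocks :
    (∀ ω v : Fin 3 → ℝ,
      (adMat ω v) ^ 2 =
        fromBlocks (Sig' (vecMulVec (Sum.elim ω v) (Sum.elim ω v))) 0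
          (Sig'' (vecMulVec (Sum.elim ω v) (Sum.elim ω v)))
          (Sig' (vecMulVec (Sum.elim ω v) (Sum.elim ω v)))) ∧
    (∀ (μ : Measure ((Fin 3 ⊕ Fin 3) → ℝ)), IsProbabilityMeasure μ →
      (∀ i, MemLp (fun x => x i) 2 μ) →
      ∀ S : Matrix (Fin 3 ⊕ Fin 3) (Fin 3 ⊕ Fin 3) ℝ,
        (∀ i j, S i j = ∫ x, x i * x j ∂μ) →
        (Matrix.of fun p q =>
            ∫ x, ((adMat (fun i => x (Sum.inl i)) (fun i => x (Sum.inr i))) ^ 2) p q ∂μ)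
          = fromBlocks (Sig' S) 0 (Sig'' S) (Sig' S)) := by
  refine ⟨adMat_sq_eq_fromBlocks_Sig, fun μ _ hL2 S hS => ?_⟩
  have hmoments : S = of fun i j => ∫ x, x i * x j ∂μ := Matrix.ext hS
  have hsq : ∀ x : (Fin 3 ⊕ Fin 3) → ℝ,
      adMat (fun i => x (Sum.inl i)) (fun i => x (Sum.inr i)) ^ 2 = sigBlocks (vecMulVec x x) :=
    fun x => adMat_sq_eq_fromBlocks_Sig (x ∘ Sum.inl) (x ∘ Sum.inr)
  ext p q
  simp only [of_apply, hsq]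
  rw [hmoments]
  exact (entryLinearMap ℝ ℝ p q ∘ₗ sigBlocks).integral_comp_comm_matrix
    fun i j => (hL2 i).integrable_mul (hL2 j)
end
end
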